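/- Let w, v, t, c ∈ Q and let 1 ≤ i, k, r, p ≤ m with i ≠ k and r ≠ p. Then the four-fold commutator [[E_{i,w}, E*_{k,v}], [E_{r,t}, E*_{p,c}]] acts on M as follows: (1) if k = r and i ≠ p, it sends (z,x,f) to (z, x + f_p(x)·⟨t,c⟩·⟨w,v⟩·x_i, f − f(x_i)·⟨v,w⟩·⟨c,t⟩·f_p); (2) if i = p and k ≠ r, it sends (z,x,f) to (z, x − f_k(x)·⟨w,v⟩·⟨t,c⟩·x_r, f + f(x_r)·⟨c,t⟩·⟨v,w⟩·f_k); (3) if k ≠ r and i ≠ p, it is the identity automorphism of M. -/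

import Mathlib

open QuadraticMap
open scoped commutatorElement

/-- The DSER elementary orthogonal transformation `E_{i,w}` on `M = Q ⊕ P ⊕ P*`,
`P = A^m`:  `E_{i,w}(z,x,f) = (z − f(xᵢ)•w, x + ⟨w,z⟩•xᵢ − f(xᵢ)·q(w)•xᵢ, f)`. -/
noncomputable def Eplus {A Q : Type*} [CommRing A] [AddCommGroup Q] [Module A Q]
    {m : ℕ} (q : QuadraticForm A Q) (i : Fin m) (w : Q) :
    (Q × (Fin m → A) × (Fin m → A)) ≃ₗ[A] (Q × (Fin m → A) × (Fin m → A)) where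
  toFun p := (p.1 - p.2.2 i • w,
    p.2.1 + polar ⇑q w p.1 • (Pi.single i 1 : Fin m → A)
      - (p.2.2 i * q w) • (Pi.single i 1 : Fin m → A),
    p.2.2)
  invFun p := (p.1 + p.2.2 i • w,
    p.2.1 - polar ⇑q w p.1 • (Pi.single i 1 : Fin m → A)
      - (p.2.2 i * q w) • (Pi.single i 1 : Fin m → A),
    p.2.2)
  map_add' p p' := by
    obtain ⟨z, x, f⟩ := p
    obtain ⟨z', x', f'⟩ := p'
    refine Prod.ext ?_ (Prod.ext ?_ rfl)
    · show z + z' - (f i + f' i) • w = (z - f i • w) + (z' - f' i • w)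
      module
    · show x + x' + polar ⇑q w (z + z') • (Pi.single i 1 : Fin m → A)
        - ((f i + f' i) * q w) • (Pi.single i 1 : Fin m → A) = _
      rw [polar_add_right]
      show _ = (x + polar ⇑q w z • (Pi.single i 1 : Fin m → A) - (f i * q w) • (Pi.single i 1 : Fin m → A))
        + (x' + polar ⇑q w z' • (Pi.single i 1 : Fin m → A) - (f' i * q w) • (Pi.single i 1 : Fin m → A))
      module
  map_smul' a p := by
    obtain ⟨z, x, f⟩ := p
    refine Prod.ext ?_ (Prod.ext ?_ rfl)
    · show a • z - (a • f) i • w = a • (z - f i • w)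
      simp only [Pi.smul_apply, smul_eq_mul]
      module
    · show a • x + polar ⇑q w (a • z) • (Pi.single i 1 : Fin m → A)
        - ((a • f) i * q w) • (Pi.single i 1 : Fin m → A)
        = a • (x + polar ⇑q w z • (Pi.single i 1 : Fin m → A) - (f i * q w) • (Pi.single i 1 : Fin m → A))
      rw [polar_smul_right]
      simp only [Pi.smul_apply, smul_eq_mul]
      module
  left_inv p := by
    obtain ⟨z, x, f⟩ := p
    refine Prod.ext ?_ (Prod.ext ?_ rfl)
    · show z - f i • w + f i • w = z
      module
    · show x + polar ⇑q w z • (Pi.single i 1 : Fin m → A) - (f i * q w) • (Pi.single i 1 : Fin m → A)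
        - polar ⇑q w (z - f i • w) • (Pi.single i 1 : Fin m → A)
        - (f i * q w) • (Pi.single i 1 : Fin m → A) = x
      rw [polar_sub_right, polar_smul_right, polar_self]
      simp only [smul_eq_mul]
      module
  right_inv p := by
    obtain ⟨z, x, f⟩ := p
    refine Prod.ext ?_ (Prod.ext ?_ rfl)
    · show z + f i • w - f i • w = z
      module
    · show x - polar ⇑q w z • (Pi.single i 1 : Fin m → A) - (f i * q w) • (Pi.single i 1 : Fin m → A)
        + polar ⇑q w (z + f i • w) • (Pi.single i 1 : Fin m → A)
        - (f i * q w) • (Pi.single i 1 : Fin m → A) = x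
      rw [polar_add_right, polar_smul_right, polar_self]
      simp only [smul_eq_mul]
      module

/-- The DSER elementary orthogonal transformation `E*_{i,w}` on `M = Q ⊕ P ⊕ P*`:
`E*_{i,w}(z,x,f) = (z − fᵢ(x)•w, x, f + ⟨w,z⟩•fᵢ − fᵢ(x)·q(w)•fᵢ)`. -/
noncomputable def Estar {A Q : Type*} [CommRing A] [AddCommGroup Q] [Module A Q]
    {m : ℕ} (q : QuadraticForm A Q) (i : Fin m) (w : Q) :
    (Q × (Fin m → A) × (Fin m → A)) ≃ₗ[A] (Q × (Fin m → A) × (Fin m → A)) where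
  toFun p := (p.1 - p.2.1 i • w,
    p.2.1,
    p.2.2 + polar ⇑q w p.1 • (Pi.single i 1 : Fin m → A)
      - (p.2.1 i * q w) • (Pi.single i 1 : Fin m → A))
  invFun p := (p.1 + p.2.1 i • w,
    p.2.1,
    p.2.2 - polar ⇑q w p.1 • (Pi.single i 1 : Fin m → A)
      - (p.2.1 i * q w) • (Pi.single i 1 : Fin m → A))
  map_add' p p' := by
    obtain ⟨z, x, f⟩ := p
    obtain ⟨z', x', f'⟩ := p'
    refine Prod.ext ?_ (Prod.ext rfl ?_)
    · show z + z' - (x i + x' i) • w = (z - x i • w) + (z' - x' i • w)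
      module
    · show f + f' + polar ⇑q w (z + z') • (Pi.single i 1 : Fin m → A)
        - ((x i + x' i) * q w) • (Pi.single i 1 : Fin m → A) = _
      rw [polar_add_right]
      show _ = (f + polar ⇑q w z • (Pi.single i 1 : Fin m → A)
          - (x i * q w) • (Pi.single i 1 : Fin m → A))
        + (f' + polar ⇑q w z' • (Pi.single i 1 : Fin m → A)
          - (x' i * q w) • (Pi.single i 1 : Fin m → A))
      module
  map_smul' a p := by
    obtain ⟨z, x, f⟩ := p
    refine Prod.ext ?_ (Prod.ext rfl ?_)
    · show a • z - (a • x) i • w = a • (z - x i • w)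
      simp only [Pi.smul_apply, smul_eq_mul]
      module
    · show a • f + polar ⇑q w (a • z) • (Pi.single i 1 : Fin m → A)
        - ((a • x) i * q w) • (Pi.single i 1 : Fin m → A)
        = a • (f + polar ⇑q w z • (Pi.single i 1 : Fin m → A)
          - (x i * q w) • (Pi.single i 1 : Fin m → A))
      rw [polar_smul_right]
      simp only [Pi.smul_apply, smul_eq_mul]
      module
  left_inv p := by
    obtain ⟨z, x, f⟩ := p
    refine Prod.ext ?_ (Prod.ext rfl ?_)
    · show z - x i • w + x i • w = z
      module
    · show f + polar ⇑q w z • (Pi.single i 1 : Fin m → A)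
        - (x i * q w) • (Pi.single i 1 : Fin m → A)
        - polar ⇑q w (z - x i • w) • (Pi.single i 1 : Fin m → A)
        - (x i * q w) • (Pi.single i 1 : Fin m → A) = f
      rw [polar_sub_right, polar_smul_right, polar_self]
      simp only [smul_eq_mul]
      module
  right_inv p := by
    obtain ⟨z, x, f⟩ := p
    refine Prod.ext ?_ (Prod.ext rfl ?_)
    · show z + x i • w - x i • w = z
      module
    · show f - polar ⇑q w z • (Pi.single i 1 : Fin m → A)
        - (x i * q w) • (Pi.single i 1 : Fin m → A)
        + polar ⇑q w (z + x i • w) • (Pi.single i 1 : Fin m → A)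
        - (x i * q w) • (Pi.single i 1 : Fin m → A) = f
      rw [polar_add_right, polar_smul_right, polar_self]
      simp only [smul_eq_mul]
      module

/-!
For `i ≠ k` the commutator `⁅E_{i,w}, E*_{k,v}⁆` fixes `Q` and is the elementary transvection
of the hyperbolic part `H(P)` along `(i,k)` with parameter `-⟨w,v⟩`. The fourfold commutator
is therefore a commutator of two such transvections, and these obey the Steinberg relations:
along `(i,k)` and `(k,p)` their commutator is the transvection along `(i,p)` with the product
parameter, and along `(i,k)` and `(r,p)` with `k ≠ r`, `i ≠ p` they commute. Case (2) is
case (1) for the inverse commutator.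
-/

section HyperbolicTransvection

variable {A : Type*} (Q : Type*) [CommRing A] [AddCommGroup Q] [Module A Q] {m : ℕ}

noncomputable def hyperbolicTransvection (i k : Fin m) (hik : i ≠ k) (a : A) :
    (Q × (Fin m → A) × (Fin m → A)) ≃ₗ[A] (Q × (Fin m → A) × (Fin m → A)) where
  toFun p :=
    (p.1, p.2.1 + (a * p.2.1 k) • Pi.single i 1, p.2.2 - (a * p.2.2 i) • Pi.single k 1)
  invFun p :=
    (p.1, p.2.1 - (a * p.2.1 k) • Pi.single i 1, p.2.2 + (a * p.2.2 i) • Pi.single k 1)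
  map_add' _ _ := by ext <;> simp <;> ring
  map_smul' _ _ := by ext <;> simp <;> ring
  left_inv _ := by ext <;> simp [hik, hik.symm]
  right_inv _ := by ext <;> simp [hik, hik.symm]

variable {Q}

@[simp]
lemma hyperbolicTransvection_apply (i k : Fin m) (hik : i ≠ k) (a : A) (z : Q)
    (x f : Fin m → A) :
    hyperbolicTransvection Q i k hik a (z, x, f)
      = (z, x + (a * x k) • Pi.single i 1, f - (a * f i) • Pi.single k 1) :=
  rfl

lemma hyperbolicTransvection_inv (i k : Fin m) (hik : i ≠ k) (a : A) :
    (hyperbolicTransvection Q i k hik a)⁻¹ = hyperbolicTransvection Q i k hik (-a) :=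
  inv_eq_of_mul_eq_one_right <| LinearEquiv.ext fun ⟨z, x, f⟩ => by
    ext <;> simp [hik, hik.symm]

lemma commutatorElement_hyperbolicTransvection (i r p : Fin m) (hir : i ≠ r) (hrp : r ≠ p)
    (hip : i ≠ p) (a b : A) :
    ⁅hyperbolicTransvection Q i r hir a, hyperbolicTransvection Q r p hrp b⁆
      = hyperbolicTransvection Q i p hip (a * b) := by
  rw [commutatorElement_def, mul_inv_eq_iff_eq_mul, mul_inv_eq_iff_eq_mul]
  refine LinearEquiv.ext fun ⟨z, x, f⟩ => Prod.ext ?_ (Prod.ext ?_ ?_) <;>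
    simp [hir, hrp.symm, hip, hip.symm] <;> module

lemma commute_hyperbolicTransvection (i k r p : Fin m) (hik : i ≠ k) (hrp : r ≠ p)
    (hkr : k ≠ r) (hip : i ≠ p) (a b : A) :
    Commute (hyperbolicTransvection Q i k hik a) (hyperbolicTransvection Q r p hrp b) :=
  LinearEquiv.ext fun ⟨z, x, f⟩ => by
    refine Prod.ext ?_ (Prod.ext ?_ ?_) <;> simp [hkr, hkr.symm, hip, hip.symm] <;> module

end HyperbolicTransvection

section ElementaryOrthogonal

variable {A Q : Type*} [CommRing A] [AddCommGroup Q] [Module A Q] {m : ℕ}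

@[simp]
lemma Eplus_apply (q : QuadraticForm A Q) (i : Fin m) (w z : Q) (x f : Fin m → A) :
    Eplus q i w (z, x, f)
      = (z - f i • w, x + polar q w z • Pi.single i 1 - (f i * q w) • Pi.single i 1, f) :=
  rfl

@[simp]
lemma Estar_apply (q : QuadraticForm A Q) (i : Fin m) (w z : Q) (x f : Fin m → A) :
    Estar q i w (z, x, f)
      = (z - x i • w, x, f + polar q w z • Pi.single i 1 - (x i * q w) • Pi.single i 1) :=
  rfl

lemma commutatorElement_Eplus_Estar (q : QuadraticForm A Q) (i k : Fin m) (hik : i ≠ k)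
    (w v : Q) :
    ⁅Eplus q i w, Estar q k v⁆ = hyperbolicTransvection Q i k hik (-polar q w v) := by
  rw [commutatorElement_def, mul_inv_eq_iff_eq_mul, mul_inv_eq_iff_eq_mul]
  refine LinearEquiv.ext fun ⟨z, x, f⟩ => Prod.ext ?_ (Prod.ext ?_ ?_) <;>
    simp [hik, hik.symm, polar_sub_right, polar_smul_right, polar_comm q v w] <;> module

end ElementaryOrthogonal

theorem fourfold_commutator_EplusEstar_EplusEstar_general
    {A Q : Type*} [CommRing A] [AddCommGroup Q] [Module A Q]
    {m : ℕ} (q : QuadraticForm A Q) (i k r p : Fin m)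
    (hik : i ≠ k) (hrp : r ≠ p) (w v t c : Q) :
    (k = r → i ≠ p → ∀ (z : Q) (x f : Fin m → A),
      ⁅⁅Eplus q i w, Estar q k v⁆, ⁅Eplus q r t, Estar q p c⁆⁆ (z, x, f)
        = (z,
           x + (x p * polar ⇑q t c * polar ⇑q w v) • (Pi.single i 1 : Fin m → A),
           f - (f i * polar ⇑q v w * polar ⇑q c t) • (Pi.single p 1 : Fin m → A))) ∧
    (i = p → k ≠ r → ∀ (z : Q) (x f : Fin m → A),
      ⁅⁅Eplus q i w, Estar q k v⁆, ⁅Eplus q r t, Estar q p c⁆⁆ (z, x, f)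
        = (z,
           x - (x k * polar ⇑q w v * polar ⇑q t c) • (Pi.single r 1 : Fin m → A),
           f + (f r * polar ⇑q c t * polar ⇑q v w) • (Pi.single k 1 : Fin m → A))) ∧
    (k ≠ r → i ≠ p → ⁅⁅Eplus q i w, Estar q k v⁆, ⁅Eplus q r t, Estar q p c⁆⁆ = 1) := by
  rw [commutatorElement_Eplus_Estar q i k hik, commutatorElement_Eplus_Estar q r p hrp]
  refine ⟨?_, ?_, fun hkr hip =>
    (commute_hyperbolicTransvection i k r p hik hrp hkr hip _ _).commutator_eq⟩
  · rintro rfl hip z x f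
    rw [commutatorElement_hyperbolicTransvection i k p hik hrp hip,
      hyperbolicTransvection_apply, polar_comm q v w, polar_comm q c t]
    refine Prod.ext rfl (Prod.ext ?_ ?_) <;> module
  · rintro rfl hkr z x f
    rw [← commutatorElement_inv, commutatorElement_hyperbolicTransvection r i k hrp hik hkr.symm,
      hyperbolicTransvection_inv, hyperbolicTransvection_apply, polar_comm q v w,
      polar_comm q c t]
    refine Prod.ext rfl (Prod.ext ?_ ?_) <;> module

theorem fourfold_commutator_EplusEstar_EplusEstar
    {A Q : Type*} [CommRing A] [Invertible (2 : A)] [AddCommGroup Q] [Module A Q]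
    {m : ℕ} (q : QuadraticForm A Q) (i k r p : Fin m)
    (hik : i ≠ k) (hrp : r ≠ p) (w v t c : Q) :
    (k = r → i ≠ p → ∀ (z : Q) (x f : Fin m → A),
      ⁅⁅Eplus q i w, Estar q k v⁆, ⁅Eplus q r t, Estar q p c⁆⁆ (z, x, f)
        = (z,
           x + (x p * polar ⇑q t c * polar ⇑q w v) • (Pi.single i 1 : Fin m → A),
           f - (f i * polar ⇑q v w * polar ⇑q c t) • (Pi.single p 1 : Fin m → A))) ∧
    (i = p → k ≠ r → ∀ (z : Q) (x f : Fin m → A),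
      ⁅⁅Eplus q i w, Estar q k v⁆, ⁅Eplus q r t, Estar q p c⁆⁆ (z, x, f)
        = (z,
           x - (x k * polar ⇑q w v * polar ⇑q t c) • (Pi.single r 1 : Fin m → A),
           f + (f r * polar ⇑q c t * polar ⇑q v w) • (Pi.single k 1 : Fin m → A))) ∧
    (k ≠ r → i ≠ p → ⁅⁅Eplus q i w, Estar q k v⁆, ⁅Eplus q r t, Estar q p c⁆⁆ = 1) :=
  fourfold_commutator_EplusEstar_EplusEstar_general q i k r p hik hrp w v t c
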